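/- Let n ≥ 2 and let E_1, …, E_n be real normed vector spaces. For each l = 1, …, n−1 let f_l : E_l → E_{l+1} be Lipschitz continuous with constant H_l ≥ 0. Given points p_l ∈ E_l for l = 1, …, n, define r_l = p_{l+1} − f_l(p_l) for l = 1, …, n−1. Then ‖f_{n−1}(f_{n−2}(⋯f_1(p_1)⋯)) − p_n‖ ≤ Σ_{l=1}^{n−1} ( ‖r_l‖ · Π_{j=l+1}^{n−1} H_j ). -/

import Mathlib

/-- Forward propagation through the composed subnetworks:
`fwd f x l = f_{l-1} (f_{l-2} (⋯ f_0 (x) ⋯))`. -/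
def fwd {E : ℕ → Type*} (f : ∀ l, E l → E (l + 1)) (x : E 0) : (l : ℕ) → E l
  | 0 => x
  | k + 1 => f k (fwd f x k)

/-!
The error `e k = ‖fwd f (p 0) k - p k‖` obeys `e (k+1) ≤ H k * e k + ‖r k‖`: write
`fwd (k+1) - p (k+1) = (f k (fwd k) - f k (p k)) - r k` and use that `f k` is `H k`-Lipschitz.
Unrolling this linear recursion from `e 0 = 0` (a discrete Grönwall inequality) gives the bound.
-/

open Finset

theorem sum_range_succ_mul_prod_Ico {R : Type*} [CommSemiring R] (r H : ℕ → R) (k : ℕ) :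
    ∑ l ∈ range (k + 1), r l * ∏ j ∈ Ico (l + 1) (k + 1), H j =
      H k * ∑ l ∈ range k, r l * ∏ j ∈ Ico (l + 1) k, H j + r k := by
  rw [sum_range_succ, mul_sum, Ico_self, prod_empty, mul_one]
  congr 1
  refine sum_congr rfl fun l hl => ?_
  rw [prod_Ico_succ_top (mem_range.mp hl)]
  ring

theorem le_prod_mul_add_sum_of_le_mul_add {e r H : ℕ → ℝ} {m : ℕ} (hH : ∀ k, 0 ≤ H k)
    (hstep : ∀ k < m, e (k + 1) ≤ H k * e k + r k) :
    e m ≤ (∏ j ∈ range m, H j) * e 0 + ∑ l ∈ range m, r l * ∏ j ∈ Ico (l + 1) m, H j := by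
  induction m with
  | zero => simp
  | succ k ih =>
    have ih := ih fun l hl => hstep l (hl.trans k.lt_succ_self)
    calc e (k + 1) ≤ H k * e k + r k := hstep k k.lt_succ_self
      _ ≤ H k * ((∏ j ∈ range k, H j) * e 0
            + ∑ l ∈ range k, r l * ∏ j ∈ Ico (l + 1) k, H j) + r k := by
        gcongr
        exact hH k
      _ = _ := by
        rw [sum_range_succ_mul_prod_Ico, prod_range_succ]
        ring

theorem norm_fwd_succ_sub_le {E : ℕ → Type*} [∀ i, NormedAddCommGroup (E i)]
    (f : ∀ l, E l → E (l + 1)) (p : ∀ l, E l) (x : E 0) (k : ℕ) {H : ℝ}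
    (hf : ∀ x y : E k, ‖f k x - f k y‖ ≤ H * ‖x - y‖) :
    ‖fwd f x (k + 1) - p (k + 1)‖ ≤ H * ‖fwd f x k - p k‖ + ‖p (k + 1) - f k (p k)‖ := by
  have hsplit : fwd f x (k + 1) - p (k + 1) =
      (f k (fwd f x k) - f k (p k)) - (p (k + 1) - f k (p k)) := by
    rw [fwd]
    abel
  rw [hsplit]
  exact (norm_sub_le _ _).trans (add_le_add_left (hf _ _) _)

theorem forward_residual_bound_general (n : ℕ)
    (E : ℕ → Type*) [∀ i, NormedAddCommGroup (E i)]
    (f : ∀ l, E l → E (l + 1))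
    (H : ℕ → ℝ) (hH : ∀ l, 0 ≤ H l)
    (hf : ∀ l, l < n - 1 → ∀ x y : E l, ‖f l x - f l y‖ ≤ H l * ‖x - y‖)
    (p : ∀ l, E l) :
    ‖fwd f (p 0) (n - 1) - p (n - 1)‖ ≤
      ∑ l ∈ Finset.range (n - 1),
        ‖p (l + 1) - f l (p l)‖ * ∏ j ∈ Finset.Ico (l + 1) (n - 1), H j := by
  have h := le_prod_mul_add_sum_of_le_mul_add (e := fun k => ‖fwd f (p 0) k - p k‖)
    (r := fun l => ‖p (l + 1) - f l (p l)‖) hH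
    fun k hk => norm_fwd_succ_sub_le f p (p 0) k (hf k hk)
  simpa [fwd] using h

/-- The key recursive inequality in the proof of Theorem 1: with `n ≥ 2`
subnetworks `f l : E l → E (l+1)` (for `l = 0, …, n-2`), each Lipschitz with
constant `H l ≥ 0`, points `p l ∈ E l`, and residuals `r l = p (l+1) - f l (p l)`,
one has `‖f_{n-2}(⋯ f_0 (p 0) ⋯) - p (n-1)‖ ≤
∑_{l=0}^{n-2} ‖r l‖ * ∏_{j=l+1}^{n-2} H j` (the empty product being `1`). -/
theorem forward_residual_bound (n : ℕ) (hn : 2 ≤ n)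
    (E : ℕ → Type*) [∀ i, NormedAddCommGroup (E i)] [∀ i, NormedSpace ℝ (E i)]
    (f : ∀ l, E l → E (l + 1))
    (H : ℕ → ℝ) (hH : ∀ l, 0 ≤ H l)
    (hf : ∀ l, l < n - 1 → ∀ x y : E l, ‖f l x - f l y‖ ≤ H l * ‖x - y‖)
    (p : ∀ l, E l) :
    ‖fwd f (p 0) (n - 1) - p (n - 1)‖ ≤
      ∑ l ∈ Finset.range (n - 1),
        ‖p (l + 1) - f l (p l)‖ * ∏ j ∈ Finset.Ico (l + 1) (n - 1), H j :=
  forward_residual_bound_general n E f H hH hf p
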